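/- arXiv:1208.4525 — 2 statements merged into one kernel-verified Lean document; each statement's English description precedes it below -/
import Mathlib

section
/- Let (λ_n) be a sequence of positive reals such that every finite subfamily is linearly independent over ℚ. If t₁ ≠ t₂ are reals and σ is a finite permutation of ℕ, then the sequences ({t₁λ_n})_n and ({t₂λ_{σ(n)}})_n are not equal, where {·} denotes fractional part. -/
/-- Let `(λ_n)` be positive reals, every finite subfamily of which is linearly independent
over `ℚ`. If `t₁ ≠ t₂` and `σ` is a finite permutation of `ℕ`, then the sequences of
fractional parts `({t₁ λ_n})_n` and `({t₂ λ_{σ(n)}})_n` are not equal. -/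
theorem stmt8 (l : ℕ → ℝ) (hpos : ∀ n, 0 < l n)
    (hind : ∀ (s : Finset ℕ) (q : ℕ → ℚ),
      (∑ n ∈ s, (q n : ℝ) * l n) = 0 → ∀ n ∈ s, q n = 0)
    (t₁ t₂ : ℝ) (ht : t₁ ≠ t₂)
    (σ : Equiv.Perm ℕ) (hσ : ∃ m : ℕ, ∀ n > m, σ n = n) :
    (fun n : ℕ => Int.fract (t₁ * l n)) ≠ (fun n : ℕ => Int.fract (t₂ * l (σ n))) := by
  intro h
  obtain ⟨m, hm⟩ := hσ
  have hts : t₁ - t₂ ≠ 0 := sub_ne_zero.mpr ht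
  have key : ∀ n > m, ∃ k : ℤ, (t₁ - t₂) * l n = k := by
    intro n hn
    have := congrFun h n
    rw [hm n hn] at this
    obtain ⟨k, hk⟩ := (Int.fract_eq_fract).mp this.symm
    exact ⟨-k, by push_cast; linarith [hk]⟩
  obtain ⟨k₁, hk₁⟩ := key (m+1) (by omega)
  obtain ⟨k₂, hk₂⟩ := key (m+2) (by omega)
  have hk₂0 : (k₂ : ℝ) ≠ 0 := by
    rw [← hk₂]
    exact mul_ne_zero hts (ne_of_gt (hpos (m+2)))
  set q : ℕ → ℚ := fun n => if n = m+1 then (k₂ : ℚ) else if n = m+2 then -(k₁ : ℚ) else 0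
    with hq
  have h1 : q (m+1) = (k₂ : ℚ) := by simp [hq]
  have h2 : q (m+2) = -(k₁ : ℚ) := by simp [hq]
  have hsum : (∑ n ∈ ({m+1, m+2} : Finset ℕ), (q n : ℝ) * l n) = 0 := by
    rw [Finset.sum_pair (by omega : m+1 ≠ m+2), h1, h2]
    push_cast
    have : (t₁ - t₂) * ((k₂ : ℝ) * l (m+1) + (-(k₁ : ℝ)) * l (m+2)) = 0 := by
      linear_combination (k₂ : ℝ) * hk₁ - (k₁ : ℝ) * hk₂
    rcases mul_eq_zero.mp this with h | h
    · exact absurd h hts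
    · exact h
  have h0 := hind {m+1, m+2} q hsum (m+1) (by simp)
  rw [h1] at h0
  exact hk₂0 (by exact_mod_cast h0)
end

section
/- Let 0 < λ₁ < λ₂ with δλ₂/λ₁ bounded, 0 < δ < 0.1, α₁, α₂ ∈ [0,1]. The Lebesgue measure of {t ∈ [0,1] : |{tλ₁} - α₁| ≤ δ/2 and |{tλ₂} - α₂| ≤ δ/2} is at most (λ₁ + 2)(2 + δλ₂/λ₁)·δ/λ₂. -/
open MeasureTheory Set

section FractWindow

variable {lam β r : ℝ}

theorem abs_fract_mul_sub_le_subset (hlam : 0 < lam) (a b : ℝ) :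
    {t : ℝ | t ∈ Icc a b ∧ |Int.fract (t * lam) - β| ≤ r} ⊆
      ⋃ m ∈ Finset.Icc ⌊a * lam⌋ ⌊b * lam⌋, Icc ((m + β - r) / lam) ((m + β + r) / lam) := by
  rintro t ⟨⟨hat, htb⟩, ht⟩
  refine mem_biUnion (x := ⌊t * lam⌋) ?_ ?_
  · exact Finset.mem_Icc.2 ⟨Int.floor_mono (by gcongr), Int.floor_mono (by gcongr)⟩
  · rw [Int.fract, abs_le] at ht
    constructor
    · rw [div_le_iff₀ hlam]; linarith
    · rw [le_div_iff₀ hlam]; linarith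

theorem card_Icc_floor_le {x y : ℝ} (h : x ≤ y) :
    ((Finset.Icc ⌊x⌋ ⌊y⌋).card : ℝ) ≤ y - x + 2 := by
  have hcard : ((Finset.Icc ⌊x⌋ ⌊y⌋).card : ℤ) = ⌊y⌋ + 1 - ⌊x⌋ := by
    have := Int.floor_mono h
    rw [Int.card_Icc]; omega
  have hcard' : ((Finset.Icc ⌊x⌋ ⌊y⌋).card : ℝ) = ⌊y⌋ + 1 - ⌊x⌋ := by exact_mod_cast hcard
  linarith [Int.floor_le y, Int.lt_floor_add_one x]

theorem volume_biUnion_Icc_le (s : Finset ℤ) :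
    volume (⋃ m ∈ s, Icc ((m + β - r) / lam) ((m + β + r) / lam)) ≤
      s.card * ENNReal.ofReal (2 * r / lam) :=
  calc _ ≤ ∑ m ∈ s, volume (Icc ((m + β - r) / lam) ((m + β + r) / lam)) :=
        measure_biUnion_finset_le _ _
    _ = ∑ m ∈ s, ENNReal.ofReal (2 * r / lam) := by
        refine Finset.sum_congr rfl fun m _ => ?_
        rw [Real.volume_Icc]
        ring_nf
    _ = _ := by rw [Finset.sum_const, nsmul_eq_mul]

/-- A window of length `ℓ` meets at most `ℓλ + 2` of the periods of `{tλ}`, and the condition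
cuts an interval of length `2r/λ` out of each. -/
theorem volume_abs_fract_mul_sub_le (hlam : 0 < lam) {ℓ : ℝ} (hℓ : 0 ≤ ℓ) (c : ℝ) :
    volume {t : ℝ | t ∈ Icc c (c + ℓ) ∧ |Int.fract (t * lam) - β| ≤ r} ≤
      ENNReal.ofReal (ℓ * lam + 2) * ENNReal.ofReal (2 * r / lam) := by
  refine (measure_mono (abs_fract_mul_sub_le_subset hlam c (c + ℓ))).trans
    ((volume_biUnion_Icc_le _).trans ?_)
  gcongr
  rw [← ENNReal.ofReal_natCast]
  refine ENNReal.ofReal_le_ofReal ((card_Icc_floor_le (by gcongr; linarith)).trans_eq ?_)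
  ring

end FractWindow

theorem stmt11_general (lam₁ lam₂ δ α₁ α₂ : ℝ) (h₁ : 0 < lam₁) (h₁₂ : lam₁ < lam₂)
    (hδ : 0 < δ) :
    volume {t : ℝ | t ∈ Icc (0:ℝ) 1 ∧ |Int.fract (t * lam₁) - α₁| ≤ δ / 2 ∧
        |Int.fract (t * lam₂) - α₂| ≤ δ / 2} ≤
      ENNReal.ofReal ((lam₁ + 2) * (2 + δ * lam₂ / lam₁) * δ / lam₂) := by
  have hlam₂ : 0 < lam₂ := h₁.trans h₁₂
  set window : ℤ → Set ℝ := fun k =>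
    {t | t ∈ Icc ((k + α₁ - δ / 2) / lam₁) ((k + α₁ - δ / 2) / lam₁ + δ / lam₁) ∧
      |Int.fract (t * lam₂) - α₂| ≤ δ / 2}
  have hsub : {t : ℝ | t ∈ Icc (0:ℝ) 1 ∧ |Int.fract (t * lam₁) - α₁| ≤ δ / 2 ∧
      |Int.fract (t * lam₂) - α₂| ≤ δ / 2} ⊆ ⋃ k ∈ Finset.Icc 0 ⌊lam₁⌋, window k := by
    rintro t ⟨ht, h₁t, h₂t⟩
    obtain ⟨k, hk, htk⟩ := mem_iUnion₂.1 (abs_fract_mul_sub_le_subset h₁ 0 1 ⟨ht, h₁t⟩)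
    rw [zero_mul, one_mul, Int.floor_zero] at hk
    refine mem_biUnion hk ⟨?_, h₂t⟩
    convert htk using 2
    ring
  calc _ ≤ ∑ k ∈ Finset.Icc 0 ⌊lam₁⌋, volume (window k) :=
        (measure_mono hsub).trans (measure_biUnion_finset_le _ _)
    _ ≤ ∑ k ∈ Finset.Icc 0 ⌊lam₁⌋,
          ENNReal.ofReal (δ / lam₁ * lam₂ + 2) * ENNReal.ofReal (2 * (δ / 2) / lam₂) :=
        Finset.sum_le_sum fun k _ => volume_abs_fract_mul_sub_le hlam₂ (by positivity) _
    _ ≤ ENNReal.ofReal (lam₁ + 2) *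
          (ENNReal.ofReal (δ / lam₁ * lam₂ + 2) * ENNReal.ofReal (2 * (δ / 2) / lam₂)) := by
        have hcard := card_Icc_floor_le h₁.le
        rw [Int.floor_zero, sub_zero] at hcard
        rw [Finset.sum_const, nsmul_eq_mul, ← ENNReal.ofReal_natCast]
        gcongr
    _ = _ := by
        rw [← ENNReal.ofReal_mul (by positivity), ← ENNReal.ofReal_mul (by positivity)]
        congr 1
        field_simp
        ring

/-- For `0 < λ₁ < λ₂`, `0 < δ < 0.1` and `α₁, α₂ ∈ [0,1]`, the Lebesgue measure of
`{t ∈ [0,1] : |{tλ₁} - α₁| ≤ δ/2 ∧ |{tλ₂} - α₂| ≤ δ/2}` is at most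
`(λ₁ + 2)(2 + δλ₂/λ₁)·δ/λ₂`. -/
theorem stmt11 (lam₁ lam₂ δ α₁ α₂ : ℝ) (h₁ : 0 < lam₁) (h₁₂ : lam₁ < lam₂)
    (hδ : 0 < δ) (hδ' : δ < 0.1) (hα₁ : α₁ ∈ Icc (0:ℝ) 1) (hα₂ : α₂ ∈ Icc (0:ℝ) 1) :
    volume {t : ℝ | t ∈ Icc (0:ℝ) 1 ∧ |Int.fract (t * lam₁) - α₁| ≤ δ / 2 ∧
        |Int.fract (t * lam₂) - α₂| ≤ δ / 2} ≤
      ENNReal.ofReal ((lam₁ + 2) * (2 + δ * lam₂ / lam₁) * δ / lam₂) :=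
  stmt11_general lam₁ lam₂ δ α₁ α₂ h₁ h₁₂ hδ
end
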